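/- arXiv:1111.1462 — 2 statements merged into one kernel-verified Lean document; each statement's English description precedes it below -/
import Mathlib

section
/- With A as defined (A = Σ_x |x⟩⟨x,x| ⊗ (1/√M) Σ_y ⟨y,y| ⊗ I_Z), for any π : [N] → S_M, any x' ∈ [N] and y' ∈ [M], applying A to |ψ_π⟩_{XYZ} ⊗ |x'⟩_{X'} ⊗ |y'⟩_{Y'} yields (1/√(NM²)) |x'⟩_X ⊗ |π_{x'}(y')⟩_Z. In particular the success probability ‖A(|ψ_π⟩⊗|x',y'⟩)‖² = 1/(NM²) is independent of π, x', y', and conditioned on success the output is the result of applying the oracle O_π to |x',y'⟩. -/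
open Matrix

/-- Applying `A` to `|ψ_π⟩ ⊗ |x'⟩ ⊗ |y'⟩` yields `(1/√(NM²)) |x'⟩|π_{x'}(y')⟩`:
the success probability is `1/(NM²)` independent of `π, x', y'`, and conditioned
on success the output is the oracle `O_π` applied to `|x', y'⟩`. -/
theorem stmt_10 (N M : ℕ) (π : Fin N → Equiv.Perm (Fin M))
    (A : Matrix (Fin N × Fin M) (Fin N × Fin M × Fin M × Fin N × Fin M) ℂ)
    (hA : ∀ (o : Fin N × Fin M) (i : Fin N × Fin M × Fin M × Fin N × Fin M),
      A o i =
        if o.1 = i.1 ∧ o.1 = i.2.2.2.1 ∧ i.2.1 = i.2.2.2.2 ∧ o.2 = i.2.2.1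
        then (1 / Real.sqrt M : ℂ) else 0)
    (x' : Fin N) (y' : Fin M) :
    let ψ : Fin N × Fin M × Fin M → ℂ :=
      fun p => if p.2.2 = π p.1 p.2.1 then (1 / Real.sqrt (N * M) : ℂ) else 0
    let w : Fin N × Fin M × Fin M × Fin N × Fin M → ℂ :=
      fun i => ψ (i.1, i.2.1, i.2.2.1) *
        ((if i.2.2.2.1 = x' then 1 else 0) * (if i.2.2.2.2 = y' then 1 else 0))
    (∀ o : Fin N × Fin M, A.mulVec w o =
        if o.1 = x' ∧ o.2 = π x' y' then (1 / Real.sqrt (N * M ^ 2) : ℂ) else 0)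
      ∧ (∑ o : Fin N × Fin M, Complex.normSq (A.mulVec w o))
          = 1 / (N * M ^ 2) := by
  intro ψ w
  have hN : 0 < (N : ℝ) := by exact_mod_cast Fin.pos_iff_nonempty.mpr ⟨x'⟩
  have hM : 0 < (M : ℝ) := by exact_mod_cast Fin.pos_iff_nonempty.mpr ⟨y'⟩
  have key : ∀ o : Fin N × Fin M, A.mulVec w o =
      if o.1 = x' ∧ o.2 = π x' y' then (1 / Real.sqrt (N * M ^ 2) : ℂ) else 0 := by
    intro o
    have hsum : A.mulVec w o = A o (x', y', π x' y', x', y') * w (x', y', π x' y', x', y') := by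
      rw [mulVec, dotProduct]
      apply Finset.sum_eq_single
      · rintro ⟨a, b, c, d, e⟩ - hne
        rw [hA]
        simp only [w, ψ]
        split_ifs with h1 h2 h3 h4 <;> try ring
        obtain ⟨ha, hd, hb, hc⟩ := h1
        exact absurd (by simp_all [Prod.ext_iff]) hne
      · intro h; exact absurd (Finset.mem_univ _) h
    rw [hsum, hA]
    simp only [w, ψ, if_pos rfl, and_true, true_and, mul_one]
    simp only [if_true, mul_one]
    by_cases ho : o.1 = x' ∧ o.2 = π x' y'
    · rw [if_pos ⟨ho.1, ho.1, ho.2⟩, if_pos ho, mul_comm,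
        div_mul_div_comm, one_mul]
      norm_cast
      rw [← Real.sqrt_mul (by positivity)]
      ring_nf
      norm_num [mul_assoc, sq]
    · rw [if_neg (fun h => ho ⟨h.1, h.2.2⟩), if_neg ho, zero_mul]
  refine ⟨key, ?_⟩
  rw [Fintype.sum_eq_single (x', π x' y')]
  · rw [key, if_pos ⟨rfl, rfl⟩]
    rw [Complex.normSq_eq_norm_sq]
    norm_cast
    rw [Real.norm_of_nonneg (by positivity)]
    rw [div_pow, one_pow, Real.sq_sqrt (by positivity)]
  · intro o ho
    rw [key, if_neg (fun h => ho (Prod.ext h.1 h.2)), Complex.normSq_zero]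
end

section
/- Let C be partitioned into {C_j}, μ a distribution with μ(C_j) > 0, and for each i in some finite index set and each class j, let V_i be random variables such that conditioned on the class j, the variables V_1,…,V_ℓ are independent, and each V_i individually satisfies Pr(V_i = w | class j) = Pr(V_i = w) for all j, w. Then the joint variable (V_1,…,V_ℓ) also satisfies Pr(V_1 = w_1,…,V_ℓ = w_ℓ | class j) = Pr(V_1 = w_1,…,V_ℓ = w_ℓ) for all j, i.e., ℓ independent weakly useless queries are jointly weakly useless. -/
open Finset

lemma fiber_sum (Ω : Type) [Fintype Ω] (J : Type) [Fintype J] [DecidableEq J]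
    (cls : Ω → J) (P : Ω → ℝ) (Q : Ω → Prop) [DecidablePred Q] :
    ∑ j : J, ∑ ω ∈ Finset.univ.filter (fun ω => cls ω = j ∧ Q ω), P ω
      = ∑ ω ∈ Finset.univ.filter Q, P ω := by
  have h : ∀ j : J, ∑ ω ∈ Finset.univ.filter (fun ω => cls ω = j ∧ Q ω), P ω
      = ∑ ω ∈ Finset.univ.filter Q, if cls ω = j then P ω else 0 := by
    intro j
    rw [Finset.sum_filter, Finset.sum_filter]
    apply Finset.sum_congr rfl
    intro ω _
    by_cases h1 : Q ω <;> by_cases h2 : cls ω = j <;> simp [h1, h2]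
  simp_rw [h]
  rw [Finset.sum_comm]
  apply Finset.sum_congr rfl
  intro ω _
  simp

/-- If, conditioned on each class, `V_1,…,V_ℓ` are independent, and each `V_i`
individually is class-independent (`Pr(V_i = w | class j) = Pr(V_i = w)`), then
the joint variable `(V_1,…,V_ℓ)` is class-independent as well: `ℓ` independent
weakly useless queries are jointly weakly useless. -/
theorem stmt_14
    (Ω : Type) [Fintype Ω] (J : Type) [Fintype J] [DecidableEq J]
    (cls : Ω → J)
    (P : Ω → ℝ) (hP0 : ∀ ω, 0 ≤ P ω) (hP1 : ∑ ω, P ω = 1)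
    (hcls : ∀ j, 0 < ∑ ω ∈ Finset.univ.filter (fun ω => cls ω = j), P ω)
    (ℓ : ℕ) (W : Type) [Fintype W] [DecidableEq W]
    (V : Fin ℓ → Ω → W)
    -- conditional independence of the V_i within each class:
    (hcondind : ∀ (j : J) (w : Fin ℓ → W),
      (∑ ω ∈ Finset.univ.filter (fun ω => cls ω = j ∧ ∀ i, V i ω = w i), P ω)
          / (∑ ω ∈ Finset.univ.filter (fun ω => cls ω = j), P ω)
        = ∏ i : Fin ℓ,
            (∑ ω ∈ Finset.univ.filter (fun ω => cls ω = j ∧ V i ω = w i), P ω)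
              / (∑ ω ∈ Finset.univ.filter (fun ω => cls ω = j), P ω))
    -- each V_i individually is class-independent:
    (hmarg : ∀ (i : Fin ℓ) (j : J) (w : W),
      (∑ ω ∈ Finset.univ.filter (fun ω => cls ω = j ∧ V i ω = w), P ω)
          / (∑ ω ∈ Finset.univ.filter (fun ω => cls ω = j), P ω)
        = ∑ ω ∈ Finset.univ.filter (fun ω => V i ω = w), P ω) :
    ∀ (j : J) (w : Fin ℓ → W),
      (∑ ω ∈ Finset.univ.filter (fun ω => cls ω = j ∧ ∀ i, V i ω = w i), P ω)
          / (∑ ω ∈ Finset.univ.filter (fun ω => cls ω = j), P ω)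
        = ∑ ω ∈ Finset.univ.filter (fun ω => ∀ i, V i ω = w i), P ω := by
  intro j w
  set p : ℝ := ∏ i : Fin ℓ, ∑ ω ∈ Finset.univ.filter (fun ω => V i ω = w i), P ω with hp
  have hcond : ∀ j' : J,
      (∑ ω ∈ Finset.univ.filter (fun ω => cls ω = j' ∧ ∀ i, V i ω = w i), P ω)
        / (∑ ω ∈ Finset.univ.filter (fun ω => cls ω = j'), P ω) = p := by
    intro j'
    rw [hcondind j' w, hp]
    exact Finset.prod_congr rfl fun i _ => hmarg i j' (w i)
  have hnum : ∀ j' : J,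
      (∑ ω ∈ Finset.univ.filter (fun ω => cls ω = j' ∧ ∀ i, V i ω = w i), P ω)
        = (∑ ω ∈ Finset.univ.filter (fun ω => cls ω = j'), P ω) * p := by
    intro j'
    have := hcond j'
    field_simp [(hcls j').ne'] at this
    linarith [this]
  have htotal : ∑ j' : J, ∑ ω ∈ Finset.univ.filter (fun ω => cls ω = j'), P ω = 1 := by
    have := fiber_sum Ω J cls P (fun _ => True)
    simpa [hP1] using this
  have hjoint : ∑ ω ∈ Finset.univ.filter (fun ω => ∀ i, V i ω = w i), P ω = p := by
    rw [← fiber_sum Ω J cls P (fun ω => ∀ i, V i ω = w i)]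
    simp_rw [hnum]
    rw [← Finset.sum_mul, htotal, one_mul]
  rw [hcond j, hjoint]
end
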